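/- arXiv:1508.06402 — 3 statements merged into one kernel-verified Lean document; each statement's English description precedes it below -/
import Mathlib

section
/- Let h be an entire function on ℂ satisfying h(ζ − πi) = h(ζ) for all ζ (period πi), and suppose there are A > 0 and a positive even integer N such that |h(ζ)| ≤ A·e^{N|Re ζ|} for all ζ. Then there exists a polynomial p of degree at most N such that h(ζ) = p(e^{2ζ})·e^{−Nζ} for all ζ ∈ ℂ. -/
noncomputable section

open MeasureTheory Complex Filter Set Polynomial

open scoped ENNReal Real

/-- The open strip `ℝ + i(-π,0)` in `ℂ`. -/
def Strip : Set ℂ := {z : ℂ | -Real.pi < z.im ∧ z.im < 0}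

/-- The Hilbert space `L²(ℝ)`. -/
abbrev L2 : Type := Lp ℂ 2 (volume : Measure ℝ)

/-- The horizontal strSlice of a function on the strip at height `l`. -/
def strSlice (Ξ : ℂ → ℂ) (l : ℝ) : ℝ → ℂ := fun θ => Ξ ((θ : ℂ) + (l : ℂ) * Complex.I)

/-- Membership in the Hardy space `H²(S_{-π,0})`: analytic on the strip, horizontally `L²`
with uniformly bounded `L²`-norms. -/
structure IsHardy (Ξ : ℂ → ℂ) : Prop where
  diff : DifferentiableOn ℂ Ξ Strip
  memL2 : ∀ l ∈ Ioo (-Real.pi) 0, MemLp (strSlice Ξ l) 2 (volume : Measure ℝ)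
  bdd : ∃ C : ℝ≥0∞, C ≠ ⊤ ∧ ∀ l ∈ Ioo (-Real.pi) 0,
    eLpNorm (strSlice Ξ l) 2 (volume : Measure ℝ) ≤ C

/-- `L²` convergence of the strSlices of `Ξ` to `g` along the filter `l`. -/
def TendstoL2 (Ξ : ℂ → ℂ) (g : ℝ → ℂ) (l : Filter ℝ) : Prop :=
  Tendsto (fun t : ℝ => eLpNorm (fun θ : ℝ => Ξ ((θ : ℂ) + (t : ℂ) * Complex.I) - g θ) 2 (volume : Measure ℝ))
    l (nhds 0)

/-- `Ξ` is a Hardy function on the strip `S_{-π,0}` with upper boundary value `g0`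
(at `Im = 0`) and lower boundary value `g1` (at `Im = -π`), in the `L²` sense. -/
structure IsHardyBV (Ξ : ℂ → ℂ) (g0 g1 : ℝ → ℂ) : Prop where
  hardy : IsHardy Ξ
  mem0 : MemLp g0 2 (volume : Measure ℝ)
  mem1 : MemLp g1 2 (volume : Measure ℝ)
  tendsto0 : TendstoL2 Ξ g0 (nhdsWithin 0 (Iio 0))
  tendsto1 : TendstoL2 Ξ g1 (nhdsWithin (-Real.pi) (Ioi (-Real.pi)))

/-- `S` is the densely defined operator `M_v Δ^{1/2} M_w` on `L²(ℝ)`: its domain consists of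
those `x` such that `w·x` is the (upper) boundary value of a Hardy function `Ξ`, and then
`S x = v · Ξ(· - πi)`, where `Ξ(· - πi)` is the lower boundary value of `Ξ`. -/
structure IsSandwich (v w : ℝ → ℂ) (S : L2 →ₗ.[ℂ] L2) : Prop where
  mem_domain_iff : ∀ x : L2, x ∈ S.domain ↔ ∃ Ξ g1, IsHardyBV Ξ (fun θ => w θ * x θ) g1
  apply_eq : ∀ (x : L2) (hx : x ∈ S.domain) (Ξ : ℂ → ℂ) (g1 : ℝ → ℂ),
      IsHardyBV Ξ (fun θ => w θ * x θ) g1 →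
      (S ⟨x, hx⟩ : ℝ → ℂ) =ᵐ[(volume : Measure ℝ)] fun θ => v θ * g1 θ

/-- `T` is the operator `M_{\bar f} Δ^{1/2}`, where `f0` is the upper boundary value of `f`:
the domain is (the set of boundary values of) `H²(S_{-π,0})` and
`(T ξ)(θ) = conj (f0 θ) · ξ(θ - πi)`. -/
def IsMfDelta (f0 : ℝ → ℂ) (T : L2 →ₗ.[ℂ] L2) : Prop :=
  IsSandwich (fun θ => (starRingEnd ℂ) (f0 θ)) (fun _ => 1) T

/-- The operator `Δ^{1/2}` itself (analytic continuation `ξ(θ) ↦ ξ(θ - πi)`). -/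
def IsDeltaHalf (T : L2 →ₗ.[ℂ] L2) : Prop := IsSandwich (fun _ => 1) (fun _ => 1) T

/-- The eigenspace `ker (T - c)` of a partially defined operator `T`. -/
def pEigenspace (T : L2 →ₗ.[ℂ] L2) (c : ℂ) : Submodule ℂ L2 where
  carrier := {x : L2 | ∃ hx : x ∈ T.domain, T ⟨x, hx⟩ = c • x}
  zero_mem' := by
    refine ⟨T.domain.zero_mem, ?_⟩
    have h0 : (⟨0, T.domain.zero_mem⟩ : T.domain) = 0 := Subtype.ext rfl
    rw [h0, T.map_zero, smul_zero]
  add_mem' := by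
    rintro a b ⟨ha, ha'⟩ ⟨hb, hb'⟩
    refine ⟨T.domain.add_mem ha hb, ?_⟩
    have h0 : (⟨a + b, T.domain.add_mem ha hb⟩ : T.domain) = ⟨a, ha⟩ + ⟨b, hb⟩ :=
      Subtype.ext rfl
    rw [h0, T.map_add, ha', hb', smul_add]
  smul_mem' := by
    rintro d a ⟨ha, ha'⟩
    refine ⟨T.domain.smul_mem d ha, ?_⟩
    have h0 : (⟨d • a, T.domain.smul_mem d ha⟩ : T.domain) = d • (⟨a, ha⟩ : T.domain) :=
      Subtype.ext rfl
    rw [h0, T.map_smul, ha']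
    exact smul_comm d c a

/-- The deficiency index `n₊(T) = dim ker(T* - i)`. -/
def defIndexPlus (T : L2 →ₗ.[ℂ] L2) : Cardinal :=
  Module.rank ℂ (pEigenspace T.adjoint Complex.I)

/-- The deficiency index `n₋(T) = dim ker(T* + i)`. -/
def defIndexMinus (T : L2 →ₗ.[ℂ] L2) : Cardinal :=
  Module.rank ℂ (pEigenspace T.adjoint (-Complex.I))

/-- `f0` is the a.e. radial boundary value of `f` on the upper edge `ℝ` of the strip. -/
def UpperBV (f : ℂ → ℂ) (f0 : ℝ → ℂ) : Prop :=
  ∀ᵐ θ : ℝ ∂(volume : Measure ℝ),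
    Tendsto (fun l : ℝ => f ((θ : ℂ) + (l : ℂ) * Complex.I)) (nhdsWithin 0 (Iio 0)) (nhds (f0 θ))

/-- `f1` is the a.e. radial boundary value of `f` on the lower edge `ℝ - πi` of the strip. -/
def LowerBV (f : ℂ → ℂ) (f1 : ℝ → ℂ) : Prop :=
  ∀ᵐ θ : ℝ ∂(volume : Measure ℝ),
    Tendsto (fun l : ℝ => f ((θ : ℂ) + (l : ℂ) * Complex.I)) (nhdsWithin (-Real.pi) (Ioi (-Real.pi)))
      (nhds (f1 θ))

/-- `f ∈ H^∞(S_{-π,0})`: bounded and analytic on the open strip. -/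
structure IsHInfty (f : ℂ → ℂ) : Prop where
  diff : DifferentiableOn ℂ f Strip
  bdd : ∃ C : ℝ, ∀ z ∈ Strip, ‖f z‖ ≤ C

lemma poly_growth_aux : ∀ (N : ℕ) (f : ℂ → ℂ), Differentiable ℂ f →
    (∃ C : ℝ, ∀ z, ‖f z‖ ≤ C * max 1 ‖z‖ ^ N) →
    ∃ p : Polynomial ℂ, p.degree ≤ (N : ℕ) ∧ ∀ z, f z = p.eval z := by
  intro N
  induction N with
  | zero =>
    rintro f hf ⟨C, hC⟩
    obtain ⟨c, hc⟩ := hf.exists_eq_const_of_bounded <| by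
      rw [isBounded_iff_forall_norm_le]
      exact ⟨C, by rintro x ⟨z, rfl⟩; simpa using hC z⟩
    refine ⟨Polynomial.C c, by simpa using Polynomial.degree_C_le, fun z => by simp [hc]⟩
  | succ N ih =>
    rintro f hf ⟨C, hC⟩
    have hC0 : 0 ≤ C := le_trans (norm_nonneg (f 0)) (by simpa using hC 0)
    set g : ℂ → ℂ := dslope f 0 with hg_def
    have hg : Differentiable ℂ g := by
      intro z
      rcases eq_or_ne z 0 with rfl | hz
      · obtain ⟨p, hp⟩ := hf.analyticAt 0
        exact hp.has_fpower_series_dslope_fslope.analyticAt.differentiableAt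
      · exact (differentiableAt_dslope_of_ne hz).mpr (hf z)
    obtain ⟨M, hM⟩ : ∃ M, ∀ z ∈ Metric.closedBall (0:ℂ) 1, ‖g z‖ ≤ M :=
      (isCompact_closedBall _ _).exists_bound_of_continuousOn hg.continuous.continuousOn
    have hM0 : 0 ≤ M := le_trans (norm_nonneg _) (hM 0 (by simp))
    have hbnd : ∀ z, ‖g z‖ ≤ max M (2*C) * max 1 ‖z‖ ^ N := by
      intro z
      rcases le_or_gt ‖z‖ 1 with hz | hz
      · have h1 : max 1 ‖z‖ = 1 := max_eq_left hz
        rw [h1, one_pow, mul_one]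
        exact (hM z (by simpa using hz)).trans (le_max_left _ _)
      · have hzpos : (0:ℝ) < ‖z‖ := lt_trans one_pos hz
        have hz0 : z ≠ 0 := by simpa using hzpos.ne'
        have h1 : max 1 ‖z‖ = ‖z‖ := max_eq_right hz.le
        have hfz : ‖f z‖ ≤ C * ‖z‖ ^ (N + 1) := by
          have := hC z; rwa [h1] at this
        have hf0 : ‖f 0‖ ≤ C := by simpa using hC 0
        have hgz : g z = (f z - f 0) / z := by
          rw [hg_def, dslope_of_ne f hz0, slope_def_field]; simp
        rw [h1, hgz]
        rw [norm_div, div_le_iff₀ hzpos]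
        have hpow : (1:ℝ) ≤ ‖z‖ ^ N := by
          have := pow_le_pow_left₀ (by norm_num : (0:ℝ) ≤ 1) hz.le N
          simpa using this
        have h2 : ‖f z - f 0‖ ≤ C * ‖z‖ ^ (N+1) + C := by
          refine (norm_sub_le _ _).trans (add_le_add hfz hf0)
        refine h2.trans ?_
        have heq : C * ‖z‖ ^ (N+1) = C * ‖z‖ ^ N * ‖z‖ := by ring
        rw [heq]
        have h3 : (1:ℝ) ≤ ‖z‖ ^ N * ‖z‖ := one_le_mul_of_one_le_of_one_le hpow hz.le
        have h4 : C ≤ C * (‖z‖ ^ N * ‖z‖) := le_mul_of_one_le_right hC0 h3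
        have h5 : (2*C) * (‖z‖ ^ N * ‖z‖) ≤ max M (2*C) * (‖z‖ ^ N * ‖z‖) :=
          mul_le_mul_of_nonneg_right (le_max_right M (2*C))
            (le_trans zero_le_one h3)
        calc C * ‖z‖ ^ N * ‖z‖ + C ≤ 2 * C * ‖z‖ ^ N * ‖z‖ := by nlinarith
          _ ≤ max M (2*C) * ‖z‖ ^ N * ‖z‖ := by nlinarith
    obtain ⟨q, hqdeg, hq⟩ := ih g hg ⟨max M (2*C), hbnd⟩
    refine ⟨Polynomial.C (f 0) + Polynomial.X * q, ?_, fun z => ?_⟩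
    · refine (Polynomial.degree_add_le _ _).trans (max_le ?_ ?_)
      · exact Polynomial.degree_C_le.trans (by exact_mod_cast WithBot.coe_le_coe.mpr (Nat.zero_le _))
      · refine (Polynomial.degree_mul_le _ _).trans ?_
        rw [Polynomial.degree_X]
        calc (1 : WithBot ℕ) + q.degree ≤ 1 + (N : WithBot ℕ) := by
              exact add_le_add le_rfl hqdeg
          _ = ((N + 1 : ℕ) : WithBot ℕ) := by
              push_cast
              ring
    · have key : z * g z = f z - f 0 := by
        have := sub_smul_dslope f 0 z
        simpa [smul_eq_mul] using this
      have : f z = f 0 + z * g z := by rw [key]; ring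
      simp [this, hq z]

/-- Let `h` be entire with period `πi` (i.e. `h(ζ - πi) = h(ζ)`), and
suppose `|h(ζ)| ≤ A e^{N |Re ζ|}` for some `A > 0` and a positive even integer `N`. Then
`h(ζ) = p(e^{2ζ}) e^{-Nζ}` for a polynomial `p` of degree at most `N`. -/
theorem periodic_entire_is_poly_of_exponential
    (h : ℂ → ℂ) (hdiff : Differentiable ℂ h)
    (hper : ∀ ζ : ℂ, h (ζ - (Real.pi : ℂ) * Complex.I) = h ζ)
    (A : ℝ) (hA : 0 < A) (N : ℕ) (hN : 0 < N) (hNeven : Even N)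
    (hbound : ∀ ζ : ℂ, ‖h ζ‖ ≤ A * Real.exp ((N : ℝ) * |ζ.re|)) :
    ∃ p : Polynomial ℂ, p.degree ≤ (N : ℕ) ∧
      ∀ ζ : ℂ, h ζ = p.eval (Complex.exp (2 * ζ)) * Complex.exp (-(N : ℂ) * ζ) := by
  set H : ℂ → ℂ := fun ζ => h ζ * Complex.exp ((N : ℂ) * ζ) with hH_def
  have hHdiff : Differentiable ℂ H :=
    hdiff.mul ((differentiable_id.const_mul ((N : ℂ))).cexp)
  have hperiodic : Function.Periodic H ((Real.pi : ℂ) * Complex.I) := by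
    intro ζ
    have h1 : h (ζ + (Real.pi : ℂ) * Complex.I) = h ζ := by
      have := hper (ζ + (Real.pi : ℂ) * Complex.I)
      simpa using this.symm
    have h2 : Complex.exp ((N : ℂ) * (ζ + (Real.pi : ℂ) * Complex.I)) =
        Complex.exp ((N : ℂ) * ζ) := by
      rw [mul_add, Complex.exp_add]
      have : Complex.exp ((N : ℂ) * ((Real.pi : ℂ) * Complex.I)) = 1 := by
        rw [Complex.exp_nat_mul, Complex.exp_pi_mul_I, hNeven.neg_one_pow]
      rw [this, mul_one]
    show h (ζ + (Real.pi : ℂ) * Complex.I) *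
        Complex.exp ((N : ℂ) * (ζ + (Real.pi : ℂ) * Complex.I)) =
      h ζ * Complex.exp ((N : ℂ) * ζ)
    rw [h1, h2]
  have key : ∀ ζ₁ ζ₂ : ℂ, Complex.exp (2 * ζ₁) = Complex.exp (2 * ζ₂) → H ζ₁ = H ζ₂ := by
    intro ζ₁ ζ₂ he
    rw [Complex.exp_eq_exp_iff_exists_int] at he
    obtain ⟨n, hn⟩ := he
    have hz : ζ₁ = ζ₂ + (n : ℂ) * ((Real.pi : ℂ) * Complex.I) := by
      linear_combination hn / 2
    rw [hz]
    exact (hperiodic.int_mul n) ζ₂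
  set G : ℂ → ℂ := fun z => H (Complex.log z / 2) with hG_def
  have hGexp : ∀ ζ : ℂ, G (Complex.exp (2 * ζ)) = H ζ := by
    intro ζ
    apply key
    rw [show (2:ℂ) * (Complex.log (Complex.exp (2 * ζ)) / 2) =
        Complex.log (Complex.exp (2 * ζ)) by ring]
    exact Complex.exp_log (Complex.exp_ne_zero _)
  have hGalt : ∀ z : ℂ, z ≠ 0 →
      G z = H (Complex.log (-z) / 2 + (Real.pi : ℂ) * Complex.I / 2) := by
    intro z hz
    apply key
    rw [show (2:ℂ) * (Complex.log z / 2) = Complex.log z by ring, Complex.exp_log hz,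
      show (2:ℂ) * (Complex.log (-z) / 2 + (Real.pi : ℂ) * Complex.I / 2) =
        Complex.log (-z) + (Real.pi : ℂ) * Complex.I by ring,
      Complex.exp_add, Complex.exp_log (neg_ne_zero.mpr hz), Complex.exp_pi_mul_I]
    ring
  have hGdiff : ∀ z : ℂ, z ≠ 0 → DifferentiableAt ℂ G z := by
    intro z hz
    by_cases hs : z ∈ Complex.slitPlane
    · exact (hHdiff _).comp z ((Complex.differentiableAt_log hs).div_const 2)
    · have hzre : z.re < 0 := by
        rw [Complex.mem_slitPlane_iff, not_or, not_lt, not_ne_iff] at hs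
        rcases lt_or_eq_of_le hs.1 with h' | h'
        · exact h'
        · exact absurd (Complex.ext (by simpa using h') (by simpa using hs.2)) hz
      have hneg : -z ∈ Complex.slitPlane := Or.inl (by simpa using hzre)
      have hd : DifferentiableAt ℂ
          (fun w => H (Complex.log (-w) / 2 + (Real.pi : ℂ) * Complex.I / 2)) z := by
        apply (hHdiff _).comp
        apply DifferentiableAt.add_const
        apply DifferentiableAt.div_const
        exact (Complex.differentiableAt_log hneg).comp z (differentiable_neg _)
      refine hd.congr_of_eventuallyEq ?_
      filter_upwards [compl_singleton_mem_nhds hz] with w hw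
      exact hGalt w hw
  have hGb : ∀ z : ℂ, z ≠ 0 → ‖G z‖ ≤ A * max 1 ‖z‖ ^ N := by
    intro z hz
    set ζ := Complex.log z / 2 with hζ
    have hmre : ((N : ℂ) * ζ).re = (N : ℝ) * ζ.re := by
      simp [Complex.mul_re]
    have hnorm : ‖G z‖ = ‖h ζ‖ * Real.exp ((N : ℝ) * ζ.re) := by
      simp only [hG_def, hH_def, norm_mul, Complex.norm_exp, ← hζ, hmre]
    have hre : ζ.re = Real.log ‖z‖ / 2 := by
      rw [hζ]
      simp [Complex.div_re, Complex.log_re]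
    rw [hnorm]
    have hb := hbound ζ
    rcases le_or_gt ‖z‖ 1 with h1 | h1
    · have hle : ζ.re ≤ 0 := by
        rw [hre]
        have : Real.log ‖z‖ ≤ 0 :=
          Real.log_nonpos (norm_nonneg z) h1
        linarith
      have hstep : ‖h ζ‖ * Real.exp ((N : ℝ) * ζ.re) ≤
          (A * Real.exp ((N : ℝ) * |ζ.re|)) * Real.exp ((N : ℝ) * ζ.re) :=
        mul_le_mul_of_nonneg_right hb (Real.exp_nonneg _)
      have heq : (A * Real.exp ((N : ℝ) * |ζ.re|)) * Real.exp ((N : ℝ) * ζ.re) = A := by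
        rw [abs_of_nonpos hle, mul_assoc, ← Real.exp_add,
          show (N : ℝ) * -ζ.re + (N : ℝ) * ζ.re = 0 by ring, Real.exp_zero, mul_one]
      rw [max_eq_left h1, one_pow, mul_one]
      exact le_of_le_of_eq hstep heq
    · have hzpos : (0:ℝ) < ‖z‖ := lt_trans one_pos h1
      have hge : 0 ≤ ζ.re := by
        rw [hre]
        have : 0 ≤ Real.log ‖z‖ :=
          Real.log_nonneg h1.le
        linarith
      have h2ζ : 2 * ζ.re = Real.log ‖z‖ := by
        rw [hre]; ring
      have hmax : max 1 ‖z‖ = ‖z‖ := max_eq_right h1.le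
      have hstep : ‖h ζ‖ * Real.exp ((N : ℝ) * ζ.re) ≤
          (A * Real.exp ((N : ℝ) * |ζ.re|)) * Real.exp ((N : ℝ) * ζ.re) :=
        mul_le_mul_of_nonneg_right hb (Real.exp_nonneg _)
      refine hstep.trans ?_
      rw [_root_.abs_of_nonneg hge, hmax, mul_assoc, ← Real.exp_add,
        show (N : ℝ) * ζ.re + (N : ℝ) * ζ.re = (N : ℝ) * (2 * ζ.re) by ring, h2ζ,
        Real.exp_nat_mul, Real.exp_log hzpos]
  set F : ℂ → ℂ := Function.update G 0 (limUnder (nhdsWithin 0 {(0:ℂ)}ᶜ) G) with hF_def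
  have hFG : ∀ z : ℂ, z ≠ 0 → F z = G z := fun z hz => Function.update_of_ne hz _ _
  have hFball : DifferentiableOn ℂ F (Metric.ball (0:ℂ) 2) := by
    apply Complex.differentiableOn_update_limUnder_of_bddAbove
      (Metric.ball_mem_nhds _ two_pos)
    · intro w hw
      exact (hGdiff w (by simpa using hw.2)).differentiableWithinAt
    · refine ⟨A * 2 ^ N, ?_⟩
      rintro x ⟨w, ⟨hw1, hw2⟩, rfl⟩
      have hw0 : w ≠ 0 := by simpa using hw2
      refine (hGb w hw0).trans ?_
      have hwn : ‖w‖ < 2 := by simpa [Metric.mem_ball] using hw1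
      have : max 1 ‖w‖ ≤ 2 := max_le one_le_two hwn.le
      exact mul_le_mul_of_nonneg_left
        (pow_le_pow_left₀ (le_trans zero_le_one (le_max_left _ _)) this N) hA.le
  have hFdiff : Differentiable ℂ F := by
    intro z
    rcases eq_or_ne z 0 with rfl | hz
    · exact hFball.differentiableAt (Metric.ball_mem_nhds _ two_pos)
    · refine (hGdiff z hz).congr_of_eventuallyEq ?_
      filter_upwards [compl_singleton_mem_nhds hz] with w hw
      exact hFG w hw
  have hFb : ∀ z : ℂ, ‖F z‖ ≤ A * max 1 ‖z‖ ^ N := by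
    intro z
    rcases eq_or_ne z 0 with rfl | hz
    · have htends : Tendsto (fun w : ℂ => ‖F w‖) (nhdsWithin 0 {(0:ℂ)}ᶜ)
          (nhds ‖F 0‖) :=
        ((hFdiff 0).continuousAt.norm.tendsto).mono_left nhdsWithin_le_nhds
      have hev : ∀ᶠ w in nhdsWithin (0:ℂ) {(0:ℂ)}ᶜ, ‖F w‖ ≤ A := by
        have hball : Metric.ball (0:ℂ) 1 ∈ nhds (0:ℂ) := Metric.ball_mem_nhds _ one_pos
        filter_upwards [nhdsWithin_le_nhds hball, self_mem_nhdsWithin] with w hw1 hw2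
        have hw0 : w ≠ 0 := by simpa using hw2
        rw [hFG w hw0]
        refine (hGb w hw0).trans ?_
        have : max 1 ‖w‖ = 1 := max_eq_left (by have := Metric.mem_ball.mp hw1; simpa using this.le)
        rw [this, one_pow, mul_one]
      have : ‖F 0‖ ≤ A := le_of_tendsto htends hev
      simpa using this
    · rw [hFG z hz]
      exact hGb z hz
  obtain ⟨p, hdeg, hp⟩ := poly_growth_aux N F hFdiff ⟨A, hFb⟩
  refine ⟨p, hdeg, fun ζ => ?_⟩
  have h1 : F (Complex.exp (2 * ζ)) = H ζ := by
    rw [hFG _ (Complex.exp_ne_zero _)]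
    exact hGexp ζ
  have h2 : H ζ * Complex.exp (-(N : ℂ) * ζ) = h ζ := by
    show h ζ * Complex.exp ((N : ℂ) * ζ) * Complex.exp (-(N : ℂ) * ζ) = h ζ
    rw [mul_assoc, ← Complex.exp_add,
      show (N : ℂ) * ζ + -(N : ℂ) * ζ = 0 by ring, Complex.exp_zero, mul_one]
  rw [← h2, ← h1, hp]
end
end

section
/- Let h be continuous on the closed strip ℝ + i[−π,0], analytic on the open strip ℝ + i(−π,0), and suppose there are A, B > 0 and 0 < α < 1 such that |h(ζ)| ≤ A·exp(B·e^{α|Re ζ|}) on the strip, while the boundary values h(θ) and h(θ − πi) belong to L²(ℝ). Then h ∈ H²(S_{−π,0}); in fact ‖h(·+iλ)‖_{L²(ℝ)} ≤ max{‖h(·)‖_{L²}, ‖h(·−πi)‖_{L²}} for all λ ∈ (−π,0). -/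
noncomputable section

open MeasureTheory Complex Filter Set Polynomial

open scoped ENNReal Real

open scoped Topology

namespace HardyAux

def CStrip : Set ℂ := {z : ℂ | -Real.pi ≤ z.im ∧ z.im ≤ 0}

lemma isOpen_strip : IsOpen Strip := by
  have : Strip = Complex.im ⁻¹' Ioo (-Real.pi) 0 := rfl
  rw [this]; exact isOpen_Ioo.preimage Complex.continuous_im

lemma isClosed_cstrip : IsClosed CStrip := by
  have : CStrip = Complex.im ⁻¹' Icc (-Real.pi) 0 := rfl
  rw [this]; exact isClosed_Icc.preimage Complex.continuous_im

lemma strip_subset_cstrip : Strip ⊆ CStrip := fun z hz => ⟨hz.1.le, hz.2.le⟩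

lemma closure_strip_subset : closure Strip ⊆ CStrip := by
  have h1 : Strip = Complex.im ⁻¹' Ioo (-Real.pi) 0 := rfl
  have h2 : CStrip = Complex.im ⁻¹' Icc (-Real.pi) 0 := rfl
  rw [h1, h2]
  refine (Complex.continuous_im.closure_preimage_subset _).trans ?_
  rw [closure_Ioo (neg_lt_zero.mpr Real.pi_pos).ne]

variable {h : ℂ → ℂ}

lemma slice_cont (hcont : ContinuousOn h CStrip) {z : ℂ} (hz : z ∈ CStrip) :
    Continuous fun θ : ℝ => h (θ + z) := by
  apply hcont.comp_continuous (Complex.continuous_ofReal.add continuous_const)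
  intro θ; simpa [CStrip] using hz

lemma memL2_restrict_of_continuous {f : ℝ → ℂ} (hf : Continuous f) (a b : ℝ) :
    MemLp f 2 (volume.restrict (Icc a b)) := by
  have : IsFiniteMeasure (volume.restrict (Icc a b)) :=
    ⟨by rw [Measure.restrict_apply_univ]; exact measure_Icc_lt_top⟩
  obtain ⟨C, hC⟩ := isCompact_Icc.exists_bound_of_continuousOn (hf.continuousOn (s := Icc a b))
  have hb : ∀ᵐ θ ∂(volume.restrict (Icc a b)), ‖f θ‖ ≤ C :=
    (ae_restrict_mem measurableSet_Icc).mono fun θ hθ => hC θ hθ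
  exact (memLp_top_of_bound hf.aestronglyMeasurable.restrict C hb).mono_exponent le_top

lemma cs_bound {u v : ℝ → ℂ} (hu : Continuous u) (hv : Continuous v) (R : ℝ) :
    ‖∫ θ in Icc (-R) R, u θ * v θ‖ ≤
      Real.sqrt (∫ θ in Icc (-R) R, ‖u θ‖ ^ 2) * Real.sqrt (∫ θ in Icc (-R) R, ‖v θ‖ ^ 2) := by
  have h2 : ENNReal.ofReal (2:ℝ) = 2 := by norm_num
  have key := integral_mul_norm_le_Lp_mul_Lq (μ := volume.restrict (Icc (-R) R))
    (f := u) (g := v) Real.HolderConjugate.two_two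
    (h2 ▸ memL2_restrict_of_continuous hu (-R) R) (h2 ▸ memL2_restrict_of_continuous hv (-R) R)
  calc ‖∫ θ in Icc (-R) R, u θ * v θ‖ ≤ ∫ θ in Icc (-R) R, ‖u θ * v θ‖ :=
        norm_integral_le_integral_norm _
    _ = ∫ θ in Icc (-R) R, ‖u θ‖ * ‖v θ‖ := by simp_rw [norm_mul]
    _ ≤ (∫ θ in Icc (-R) R, ‖u θ‖ ^ (2:ℝ)) ^ (1/2:ℝ) * (∫ θ in Icc (-R) R, ‖v θ‖ ^ (2:ℝ)) ^ (1/2:ℝ) := key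
    _ = _ := by
        rw [← Real.sqrt_eq_rpow, ← Real.sqrt_eq_rpow]
        norm_num [Real.rpow_two]

lemma shift_sq_integral_le {f : ℝ → ℂ} (hf : MemLp f 2 (volume : Measure ℝ)) (x R : ℝ) :
    ∫ θ in Icc (-R) R, ‖f (θ + x)‖ ^ 2 ≤ ∫ θ : ℝ, ‖f θ‖ ^ 2 := by
  have hfi : Integrable (fun θ => ‖f θ‖ ^ 2) volume := by
    have := hf.integrable_norm_rpow (by norm_num) (by norm_num)
    simpa [Real.rpow_two] using this
  have hsh : Integrable (fun θ : ℝ => ‖f (θ + x)‖ ^ 2) volume := hfi.comp_add_right x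
  calc ∫ θ in Icc (-R) R, ‖f (θ + x)‖ ^ 2 ≤ ∫ θ : ℝ, ‖f (θ + x)‖ ^ 2 :=
        setIntegral_le_integral hsh (Eventually.of_forall fun θ => by positivity)
    _ = ∫ θ : ℝ, ‖f θ‖ ^ 2 := integral_add_right_eq_self (fun θ => ‖f θ‖ ^ 2) x


lemma F_contOn (hcont : ContinuousOn h CStrip) {g : ℝ → ℂ} (hg : Continuous g) (R : ℝ) :
    ContinuousOn (fun z => ∫ θ in Icc (-R) R, h (θ + z) * g θ) CStrip := by
  intro z₀ hz₀
  set K : Set ℂ := (fun p : ℝ × ℂ => (p.1 : ℂ) + p.2) ''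
    (Icc (-R) R ×ˢ (Metric.closedBall z₀ 1 ∩ CStrip)) with hKdef
  have hK : IsCompact K :=
    (isCompact_Icc.prod ((isCompact_closedBall z₀ 1).inter_right isClosed_cstrip)).image
      (by fun_prop)
  have hKsub : K ⊆ CStrip := by
    rintro - ⟨⟨θ, w⟩, ⟨-, -, hw⟩, rfl⟩
    simpa [CStrip] using hw
  obtain ⟨C, hC⟩ := hK.exists_bound_of_continuousOn (hcont.mono hKsub)
  apply continuousWithinAt_of_dominated (bound := fun θ => C * ‖g θ‖)
  · filter_upwards [self_mem_nhdsWithin] with z hz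
    exact ((slice_cont hcont hz).mul hg).aestronglyMeasurable.restrict
  · filter_upwards [inter_mem (nhdsWithin_le_nhds (Metric.closedBall_mem_nhds z₀ one_pos))
      self_mem_nhdsWithin] with z hz
    filter_upwards [ae_restrict_mem measurableSet_Icc] with θ hθ
    have hmem : (θ : ℂ) + z ∈ K := ⟨(θ, z), ⟨hθ, hz⟩, rfl⟩
    rw [norm_mul]
    exact mul_le_mul_of_nonneg_right (hC _ hmem) (norm_nonneg _)
  · exact ((continuous_const.mul hg.norm).integrableOn_Icc)
  · refine Eventually.of_forall fun θ => ContinuousWithinAt.mul ?_ continuousWithinAt_const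
    refine ContinuousWithinAt.comp (hcont _ ?_) (continuous_const.add continuous_id).continuousWithinAt ?_
    · simpa [CStrip] using hz₀
    · intro z hz; simpa [CStrip] using hz

set_option maxHeartbeats 1000000 in
lemma F_diffOn (hcont : ContinuousOn h CStrip) (hdiff : DifferentiableOn ℂ h Strip)
    {g : ℝ → ℂ} (hg : Continuous g) (R : ℝ) :
    DifferentiableOn ℂ (fun z => ∫ θ in Icc (-R) R, h (θ + z) * g θ) Strip := by
  have hdc : ContinuousOn (deriv h) Strip :=
    ((hdiff.analyticOnNhd isOpen_strip).deriv).continuousOn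
  intro z₀ hz₀
  set δ := min (z₀.im + Real.pi) (-z₀.im) with hδdef
  have hδpos : 0 < δ := lt_min (by linarith [hz₀.1]) (by linarith [hz₀.2])
  have hδ1 : δ ≤ z₀.im + Real.pi := min_le_left _ _
  have hδ2 : δ ≤ -z₀.im := min_le_right _ _
  set ε := δ/2 with hεdef
  have hεpos : 0 < ε := by positivity
  have hball : ∀ w ∈ Metric.closedBall z₀ ε, w ∈ Strip := by
    intro w hw
    have h1 : |w.im - z₀.im| ≤ ε := by
      calc |w.im - z₀.im| = |(w - z₀).im| := by simp [Complex.sub_im]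
        _ ≤ ‖w - z₀‖ := Complex.abs_im_le_norm _
        _ ≤ ε := by rwa [Metric.mem_closedBall, Complex.dist_eq] at hw
    rw [abs_le] at h1
    constructor
    · have := h1.1; simp only [hεdef] at this; linarith
    · have := h1.2; simp only [hεdef] at this; linarith
  set K : Set ℂ := (fun p : ℝ × ℂ => (p.1 : ℂ) + p.2) ''
    (Icc (-R) R ×ˢ Metric.closedBall z₀ ε) with hKdef
  have hK : IsCompact K := (isCompact_Icc.prod (isCompact_closedBall z₀ ε)).image (by fun_prop)
  have hKsub : K ⊆ Strip := by
    rintro - ⟨⟨θ, w⟩, ⟨-, hw⟩, rfl⟩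
    have := hball w hw
    simpa [Strip] using this
  obtain ⟨C, hC⟩ := hK.exists_bound_of_continuousOn (hdc.mono hKsub)
  have hmeas : ∀ᶠ z in 𝓝 z₀, AEStronglyMeasurable (fun θ : ℝ => h (θ + z) * g θ)
      (volume.restrict (Icc (-R) R)) := by
    filter_upwards [Metric.closedBall_mem_nhds z₀ hεpos] with z hz
    exact ((slice_cont hcont (strip_subset_cstrip (hball z hz))).mul hg).aestronglyMeasurable.restrict
  have hint : Integrable (fun θ : ℝ => h (θ + z₀) * g θ) (volume.restrict (Icc (-R) R)) :=
    ((slice_cont hcont (strip_subset_cstrip hz₀)).mul hg).integrableOn_Icc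
  have hmeas' : AEStronglyMeasurable (fun θ : ℝ => deriv h (θ + z₀) * g θ)
      (volume.restrict (Icc (-R) R)) := by
    refine Continuous.aestronglyMeasurable ?_ |>.restrict
    exact (hdc.comp_continuous (Complex.continuous_ofReal.add continuous_const)
      (fun θ => by simpa [Strip] using hz₀)).mul hg
  have hbound : ∀ᵐ (θ : ℝ) ∂(volume.restrict (Icc (-R) R)), ∀ z ∈ Metric.ball z₀ ε,
      ‖deriv h ((θ : ℂ) + z) * g θ‖ ≤ C * ‖g θ‖ := by
    filter_upwards [ae_restrict_mem measurableSet_Icc] with θ hθ z hz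
    have hmem : (θ : ℂ) + z ∈ K := ⟨(θ, z), ⟨hθ, Metric.ball_subset_closedBall hz⟩, rfl⟩
    rw [norm_mul]
    exact mul_le_mul_of_nonneg_right (hC _ hmem) (norm_nonneg _)
  have hbint : Integrable (fun θ => C * ‖g θ‖) (volume.restrict (Icc (-R) R)) :=
    (continuous_const.mul hg.norm).integrableOn_Icc
  have hdiff' : ∀ᵐ (θ : ℝ) ∂(volume.restrict (Icc (-R) R)), ∀ z ∈ Metric.ball z₀ ε,
      HasDerivAt (fun z => h ((θ : ℂ) + z) * g θ) (deriv h ((θ : ℂ) + z) * g θ) z := by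
    refine Eventually.of_forall fun θ z hz => ?_
    have hw : (θ:ℂ) + z ∈ Strip := by
      have := hball z (Metric.ball_subset_closedBall hz)
      simpa [Strip] using this
    have hda : DifferentiableAt ℂ h ((θ:ℂ) + z) :=
      hdiff.differentiableAt (isOpen_strip.mem_nhds hw)
    exact (hda.hasDerivAt.comp_const_add (θ:ℂ) z).mul_const (g θ)
  have main := hasDerivAt_integral_of_dominated_loc_of_deriv_le (Metric.ball_mem_nhds z₀ hεpos) hmeas hint hmeas'
    hbound hbint hdiff'
  exact main.2.differentiableAt.differentiableWithinAt

lemma F_diffContOnCl (hcont : ContinuousOn h CStrip) (hdiff : DifferentiableOn ℂ h Strip)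
    {g : ℝ → ℂ} (hg : Continuous g) (R : ℝ) :
    DiffContOnCl ℂ (fun z => ∫ θ in Icc (-R) R, h (θ + z) * g θ) Strip :=
  ⟨F_diffOn hcont hdiff hg R, (F_contOn hcont hg R).mono closure_strip_subset⟩


lemma F_isBigO (hcont : ContinuousOn h CStrip)
    {A B αe : ℝ} (hA : 0 ≤ A) (hB : 0 ≤ B) (hα0 : 0 < αe)
    (hgrowth : ∀ z : ℂ, -Real.pi ≤ z.im → z.im ≤ 0 →
      ‖h z‖ ≤ A * Real.exp (B * Real.exp (αe * |z.re|)))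
    {g : ℝ → ℂ} (hg : Continuous g) (R : ℝ) (hR : 0 < R) :
    (fun z => ∫ θ in Icc (-R) R, h (θ + z) * g θ) =O[comap (_root_.abs ∘ Complex.re) atTop ⊓
        𝓟 (Complex.im ⁻¹' Ioo (-Real.pi) 0)]
      fun z => Real.exp (B * Real.exp (αe * R) * Real.exp (αe * |z.re|)) := by
  refine Asymptotics.IsBigO.of_bound (A * ∫ θ in Icc (-R) R, ‖g θ‖) ?_
  rw [eventually_inf_principal]
  refine Eventually.of_forall fun z hz => ?_
  have hzs : z ∈ Strip := hz
  have hcz : Continuous fun θ : ℝ => h ((θ:ℂ) + z) := slice_cont hcont (strip_subset_cstrip hzs)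
  have step1 : ‖∫ θ in Icc (-R) R, h ((θ:ℂ) + z) * g θ‖ ≤
      ∫ θ in Icc (-R) R, ‖h ((θ:ℂ) + z)‖ * ‖g θ‖ := by
    refine (norm_integral_le_integral_norm _).trans_eq ?_
    simp_rw [norm_mul]
  have step2 : ∫ θ in Icc (-R) R, ‖h ((θ:ℂ) + z)‖ * ‖g θ‖ ≤
      ∫ θ in Icc (-R) R, (A * Real.exp (B * Real.exp (αe * (R + |z.re|)))) * ‖g θ‖ := by
    refine setIntegral_mono_on (hcz.norm.mul hg.norm).integrableOn_Icc
      ((continuous_const.mul hg.norm).integrableOn_Icc) measurableSet_Icc fun θ hθ => ?_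
    refine mul_le_mul_of_nonneg_right ?_ (norm_nonneg _)
    have h1 : ‖h ((θ:ℂ) + z)‖ ≤ A * Real.exp (B * Real.exp (αe * |((θ:ℂ) + z).re|)) := by
      refine hgrowth _ ?_ ?_ <;> simp only [Complex.add_im, Complex.ofReal_im, zero_add]
      · exact hzs.1.le
      · exact hzs.2.le
    refine h1.trans ?_
    have hB0 : 0 ≤ A * Real.exp (B * Real.exp (αe * |((θ:ℂ) + z).re|)) :=
      (norm_nonneg _).trans h1
    have h2 : |((θ:ℂ) + z).re| ≤ R + |z.re| := by
      simp only [Complex.add_re, Complex.ofReal_re]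
      refine (abs_add_le _ _).trans ?_
      have : |θ| ≤ R := abs_le.2 ⟨hθ.1, hθ.2⟩
      linarith
    gcongr
  have step3 : ∫ θ in Icc (-R) R, (A * Real.exp (B * Real.exp (αe * (R + |z.re|)))) * ‖g θ‖ =
      (A * ∫ θ in Icc (-R) R, ‖g θ‖) * Real.exp (B * Real.exp (αe * R) * Real.exp (αe * |z.re|)) := by
    rw [integral_const_mul]
    rw [mul_add αe R |z.re|, Real.exp_add]
    ring_nf
  calc ‖∫ θ in Icc (-R) R, h ((θ:ℂ) + z) * g θ‖ ≤ _ := step1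
    _ ≤ _ := step2
    _ = _ := step3
    _ ≤ (A * ∫ θ in Icc (-R) R, ‖g θ‖) *
        ‖Real.exp (B * Real.exp (αe * R) * Real.exp (αe * |z.re|))‖ := by
      rw [Real.norm_eq_abs, Real.abs_exp]


lemma top_line_bound (hcont : ContinuousOn h CStrip)
    (hL2top : MemLp (fun θ : ℝ => h θ) 2 (volume : Measure ℝ))
    {g : ℝ → ℂ} (hg : Continuous g) (R : ℝ) {z : ℂ} (hz : z.im = 0) :
    ‖∫ θ in Icc (-R) R, h (θ + z) * g θ‖ ≤
      Real.sqrt (∫ θ : ℝ, ‖h θ‖ ^ 2) * Real.sqrt (∫ θ in Icc (-R) R, ‖g θ‖ ^ 2) := by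
  have hzc : z ∈ CStrip := ⟨by rw [hz]; exact neg_nonpos.mpr Real.pi_pos.le, hz.le⟩
  have hcz : Continuous fun θ : ℝ => h ((θ:ℂ) + z) := slice_cont hcont hzc
  have hrw : ∀ θ : ℝ, ((θ:ℂ) + z) = (((θ + z.re : ℝ)) : ℂ) := by
    intro θ; apply Complex.ext <;> simp [hz]
  calc ‖∫ θ in Icc (-R) R, h ((θ:ℂ) + z) * g θ‖
      ≤ Real.sqrt (∫ θ in Icc (-R) R, ‖h ((θ:ℂ) + z)‖ ^ 2) *
        Real.sqrt (∫ θ in Icc (-R) R, ‖g θ‖ ^ 2) := cs_bound hcz hg R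
    _ ≤ _ := by
        refine mul_le_mul_of_nonneg_right (Real.sqrt_le_sqrt ?_) (Real.sqrt_nonneg _)
        have heq : (∫ θ in Icc (-R) R, ‖h ((θ:ℂ) + z)‖ ^ 2) =
            ∫ θ in Icc (-R) R, ‖(fun t : ℝ => h (t : ℂ)) (θ + z.re)‖ ^ 2 := by
          simp_rw [hrw]
        rw [heq]
        exact shift_sq_integral_le hL2top z.re R

lemma bot_line_bound (hcont : ContinuousOn h CStrip)
    (hL2bot : MemLp (fun θ : ℝ => h ((θ : ℂ) - (Real.pi : ℂ) * Complex.I)) 2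
      (volume : Measure ℝ))
    {g : ℝ → ℂ} (hg : Continuous g) (R : ℝ) {z : ℂ} (hz : z.im = -Real.pi) :
    ‖∫ θ in Icc (-R) R, h (θ + z) * g θ‖ ≤
      Real.sqrt (∫ θ : ℝ, ‖h ((θ : ℂ) - (Real.pi : ℂ) * Complex.I)‖ ^ 2) *
        Real.sqrt (∫ θ in Icc (-R) R, ‖g θ‖ ^ 2) := by
  have hzc : z ∈ CStrip := ⟨hz.ge, by rw [hz]; exact neg_nonpos.mpr Real.pi_pos.le⟩
  have hcz : Continuous fun θ : ℝ => h ((θ:ℂ) + z) := slice_cont hcont hzc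
  have hrw : ∀ θ : ℝ, ((θ:ℂ) + z) = (((θ + z.re : ℝ) : ℂ) - (Real.pi : ℂ) * Complex.I) := by
    intro θ; apply Complex.ext <;> simp [hz]
  calc ‖∫ θ in Icc (-R) R, h ((θ:ℂ) + z) * g θ‖
      ≤ Real.sqrt (∫ θ in Icc (-R) R, ‖h ((θ:ℂ) + z)‖ ^ 2) *
        Real.sqrt (∫ θ in Icc (-R) R, ‖g θ‖ ^ 2) := cs_bound hcz hg R
    _ ≤ _ := by
        refine mul_le_mul_of_nonneg_right (Real.sqrt_le_sqrt ?_) (Real.sqrt_nonneg _)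
        have heq : (∫ θ in Icc (-R) R, ‖h ((θ:ℂ) + z)‖ ^ 2) =
            ∫ θ in Icc (-R) R,
              ‖(fun t : ℝ => h ((t : ℂ) - (Real.pi : ℂ) * Complex.I)) (θ + z.re)‖ ^ 2 := by
          simp_rw [hrw]
        rw [heq]
        exact shift_sq_integral_le hL2bot z.re R


lemma key_setIntegral_bound (hcont : ContinuousOn h CStrip) (hdiff : DifferentiableOn ℂ h Strip)
    {A B αe : ℝ} (hA : 0 ≤ A) (hB : 0 ≤ B) (hα0 : 0 < αe) (hα1 : αe < 1)
    (hgrowth : ∀ z : ℂ, -Real.pi ≤ z.im → z.im ≤ 0 →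
      ‖h z‖ ≤ A * Real.exp (B * Real.exp (αe * |z.re|)))
    (hL2top : MemLp (fun θ : ℝ => h θ) 2 (volume : Measure ℝ))
    (hL2bot : MemLp (fun θ : ℝ => h ((θ : ℂ) - (Real.pi : ℂ) * Complex.I)) 2
      (volume : Measure ℝ))
    {l : ℝ} (hl : l ∈ Ioo (-Real.pi) 0) (R : ℝ) (hR : 0 < R) :
    ∫ θ in Icc (-R) R, ‖h ((θ:ℂ) + (l:ℂ) * Complex.I)‖ ^ 2 ≤
      max (∫ θ : ℝ, ‖h θ‖ ^ 2) (∫ θ : ℝ, ‖h ((θ:ℂ) - (Real.pi:ℂ) * Complex.I)‖ ^ 2) := by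
  set u : ℝ → ℂ := fun θ => h ((θ:ℂ) + (l:ℂ) * Complex.I) with hu
  set g : ℝ → ℂ := fun θ => (starRingEnd ℂ) (u θ) with hgdef
  have hlI : ((l:ℂ) * Complex.I) ∈ CStrip := by
    constructor <;> simp only [Complex.mul_im, Complex.ofReal_re, Complex.I_im,
      Complex.ofReal_im, Complex.I_re, mul_one, mul_zero, zero_mul, add_zero, zero_add]
    · exact hl.1.le
    · exact hl.2.le
  have huc : Continuous u := slice_cont hcont hlI
  have hgc : Continuous g := Complex.continuous_conj.comp huc
  set S := ∫ θ in Icc (-R) R, ‖u θ‖ ^ 2 with hS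
  have hS0 : 0 ≤ S := setIntegral_nonneg measurableSet_Icc fun θ _ => by positivity
  set I0 := ∫ θ : ℝ, ‖h θ‖ ^ 2 with hI0def
  set I1 := ∫ θ : ℝ, ‖h ((θ:ℂ) - (Real.pi:ℂ) * Complex.I)‖ ^ 2 with hI1def
  have hI0 : 0 ≤ I0 := integral_nonneg fun θ => by positivity
  have hI1 : 0 ≤ I1 := integral_nonneg fun θ => by positivity
  set M := Real.sqrt (max I0 I1) with hM
  have hgsq : (∫ θ in Icc (-R) R, ‖g θ‖ ^ 2) = S := by
    rw [hS]; congr 1; funext θ; rw [hgdef]; simp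
  have hPL : ∀ z : ℂ, -Real.pi ≤ z.im → z.im ≤ 0 →
      ‖∫ θ in Icc (-R) R, h ((θ:ℂ) + z) * g θ‖ ≤ M * Real.sqrt S := by
    intro z hz1 hz2
    refine PhragmenLindelof.horizontal_strip (a := -Real.pi) (b := 0)
      (F_diffContOnCl hcont hdiff hgc R) ⟨αe, ?_, B * Real.exp (αe * R), ?_⟩ ?_ ?_ hz1 hz2
    · rw [zero_sub, neg_neg, div_self Real.pi_ne_zero]
      exact hα1
    · exact F_isBigO hcont hA hB hα0 hgrowth hgc R hR
    · intro w hw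
      refine (bot_line_bound hcont hL2bot hgc R hw).trans ?_
      rw [hgsq]
      exact mul_le_mul_of_nonneg_right
        (Real.sqrt_le_sqrt (le_max_right _ _)) (Real.sqrt_nonneg _)
    · intro w hw
      refine (top_line_bound hcont hL2top hgc R hw).trans ?_
      rw [hgsq]
      exact mul_le_mul_of_nonneg_right
        (Real.sqrt_le_sqrt (le_max_left _ _)) (Real.sqrt_nonneg _)
  have him : ((l:ℂ) * Complex.I).im = l := by simp
  have hSle : S ≤ M * Real.sqrt S := by
    have h1 := hPL ((l:ℂ) * Complex.I) (by rw [him]; exact hl.1.le) (by rw [him]; exact hl.2.le)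
    have h2 : (∫ θ in Icc (-R) R, h ((θ:ℂ) + (l:ℂ) * Complex.I) * g θ) = (S : ℂ) := by
      have hpt : ∀ θ : ℝ, h ((θ:ℂ) + (l:ℂ) * Complex.I) * g θ = ((‖u θ‖ ^ 2 : ℝ) : ℂ) := by
        intro θ
        rw [hgdef, hu]
        rw [Complex.mul_conj]
        rw [Complex.normSq_eq_norm_sq]
      rw [show (fun θ : ℝ => h ((θ:ℂ) + (l:ℂ) * Complex.I) * g θ) =
          fun θ : ℝ => ((‖u θ‖ ^ 2 : ℝ) : ℂ) from funext hpt]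
      rw [hS]; exact integral_ofReal (𝕜 := ℂ)
    rw [h2] at h1
    rwa [Complex.norm_real, Real.norm_eq_abs, _root_.abs_of_nonneg hS0] at h1
  by_cases hSz : S = 0
  · rw [hSz]; exact hI0.trans (le_max_left _ _)
  · have hSpos : 0 < S := lt_of_le_of_ne hS0 (Ne.symm hSz)
    have hsq : 0 < Real.sqrt S := Real.sqrt_pos.mpr hSpos
    have h3 : Real.sqrt S ≤ M := by
      have : Real.sqrt S * Real.sqrt S ≤ M * Real.sqrt S := by
        rwa [Real.mul_self_sqrt hS0]
      exact le_of_mul_le_mul_right this hsq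
    calc S = Real.sqrt S * Real.sqrt S := (Real.mul_self_sqrt hS0).symm
      _ ≤ M * M := mul_le_mul h3 h3 (Real.sqrt_nonneg _) ((Real.sqrt_nonneg _).trans h3)
      _ = max I0 I1 := Real.mul_self_sqrt (le_max_of_le_left hI0)


lemma lintegral_sq_restrict {f : ℝ → ℂ} (hfc : Continuous f) (R : ℝ) :
    ENNReal.ofReal (∫ θ in Icc (-R) R, ‖f θ‖ ^ 2) =
      ∫⁻ θ in Icc (-R) R, (‖f θ‖₊ : ℝ≥0∞) ^ 2 ∂(volume : Measure ℝ) := by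
  rw [ofReal_integral_eq_lintegral_ofReal (f := fun θ => ‖f θ‖ ^ 2) (μ := volume.restrict (Icc (-R) R)) (by exact (hfc.norm.pow 2).integrableOn_Icc)
    (Eventually.of_forall fun θ => by positivity)]
  exact lintegral_congr fun θ => by
    rw [ENNReal.ofReal_pow (norm_nonneg _), ofReal_norm, enorm_eq_nnnorm]

lemma lintegral_sq_full {f : ℝ → ℂ} (hf : MemLp f 2 (volume : Measure ℝ)) :
    ENNReal.ofReal (∫ θ : ℝ, ‖f θ‖ ^ 2) = ∫⁻ θ, (‖f θ‖₊ : ℝ≥0∞) ^ 2 ∂(volume : Measure ℝ) := by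
  have hfi : Integrable (fun θ => ‖f θ‖ ^ 2) (volume : Measure ℝ) := by
    have := hf.integrable_norm_rpow (by norm_num) (by norm_num)
    simpa [Real.rpow_two] using this
  rw [ofReal_integral_eq_lintegral_ofReal hfi (Eventually.of_forall fun θ => by positivity)]
  exact lintegral_congr fun θ => by
    rw [ENNReal.ofReal_pow (norm_nonneg _), ofReal_norm, enorm_eq_nnnorm]

lemma eLpNorm_eq_sq (f : ℝ → ℂ) :
    eLpNorm f 2 (volume : Measure ℝ) =
      (∫⁻ θ, (‖f θ‖₊ : ℝ≥0∞) ^ 2 ∂(volume : Measure ℝ)) ^ (1/2 : ℝ) := by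
  rw [eLpNorm_eq_lintegral_rpow_enorm_toReal (by norm_num) (by norm_num)]
  have h2 : ((2:ℝ≥0∞)).toReal = (2:ℝ) := by norm_num
  rw [h2]
  congr 1
  exact lintegral_congr fun θ => by
    rw [show (2:ℝ) = ((2:ℕ):ℝ) by norm_num, ENNReal.rpow_natCast, enorm_eq_nnnorm]

lemma eLpNorm_slice_le (hcont : ContinuousOn h CStrip) (hdiff : DifferentiableOn ℂ h Strip)
    {A B αe : ℝ} (hA : 0 ≤ A) (hB : 0 ≤ B) (hα0 : 0 < αe) (hα1 : αe < 1)
    (hgrowth : ∀ z : ℂ, -Real.pi ≤ z.im → z.im ≤ 0 →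
      ‖h z‖ ≤ A * Real.exp (B * Real.exp (αe * |z.re|)))
    (hL2top : MemLp (fun θ : ℝ => h θ) 2 (volume : Measure ℝ))
    (hL2bot : MemLp (fun θ : ℝ => h ((θ : ℂ) - (Real.pi : ℂ) * Complex.I)) 2
      (volume : Measure ℝ))
    {l : ℝ} (hl : l ∈ Ioo (-Real.pi) 0) :
    eLpNorm (fun θ : ℝ => h ((θ:ℂ) + (l:ℂ) * Complex.I)) 2 (volume : Measure ℝ) ≤
      max (eLpNorm (fun θ : ℝ => h θ) 2 (volume : Measure ℝ))
        (eLpNorm (fun θ : ℝ => h ((θ:ℂ) - (Real.pi:ℂ) * Complex.I)) 2 (volume : Measure ℝ)) := by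
  set u : ℝ → ℂ := fun θ => h ((θ:ℂ) + (l:ℂ) * Complex.I) with hu
  have hlI : ((l:ℂ) * Complex.I) ∈ CStrip := by
    constructor <;> simp only [Complex.mul_im, Complex.ofReal_re, Complex.I_im,
      Complex.ofReal_im, Complex.I_re, mul_one, mul_zero, zero_mul, add_zero, zero_add]
    · exact hl.1.le
    · exact hl.2.le
  have huc : Continuous u := slice_cont hcont hlI
  set I0 := ∫ θ : ℝ, ‖h θ‖ ^ 2 with hI0def
  set I1 := ∫ θ : ℝ, ‖h ((θ:ℂ) - (Real.pi:ℂ) * Complex.I)‖ ^ 2 with hI1def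
  have hkey : ∀ n : ℕ, (∫⁻ θ in Icc (-((n:ℝ)+1)) ((n:ℝ)+1), (‖u θ‖₊ : ℝ≥0∞) ^ 2
      ∂(volume : Measure ℝ)) ≤ ENNReal.ofReal (max I0 I1) := by
    intro n
    rw [← lintegral_sq_restrict huc]
    exact ENNReal.ofReal_le_ofReal
      (key_setIntegral_bound hcont hdiff hA hB hα0 hα1 hgrowth hL2top hL2bot hl _
        (by positivity))
  set φ : ℝ → ℝ≥0∞ := fun θ => (‖u θ‖₊ : ℝ≥0∞) ^ 2 with hφ
  have hφm : Measurable φ := (huc.measurable.nnnorm.coe_nnreal_ennreal).pow_const 2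
  set fn : ℕ → ℝ → ℝ≥0∞ := fun n => (Icc (-((n:ℝ)+1)) ((n:ℝ)+1)).indicator φ with hfn
  have hmono : Monotone fn := by
    intro m n hmn
    have hcast : (m:ℝ) ≤ (n:ℝ) := Nat.cast_le.2 hmn
    exact Set.indicator_le_indicator_of_subset
      (Icc_subset_Icc (by linarith) (by linarith)) (fun θ => zero_le)
  have hsup : ∀ θ, ⨆ n, fn n θ = φ θ := by
    intro θ
    refine le_antisymm (iSup_le fun n => Set.indicator_le_self _ _ θ) ?_
    obtain ⟨n, hn⟩ := exists_nat_ge |θ|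
    refine le_iSup_of_le n ?_
    have hmem : θ ∈ Icc (-((n:ℝ)+1)) ((n:ℝ)+1) := by
      obtain ⟨h1, h2⟩ := abs_le.1 hn
      exact ⟨by linarith, by linarith⟩
    simp only [hfn]
    rw [Set.indicator_of_mem hmem]
  have hT : (∫⁻ θ, φ θ ∂(volume : Measure ℝ)) ≤ ENNReal.ofReal (max I0 I1) := by
    have hlim : (∫⁻ θ, φ θ ∂(volume : Measure ℝ)) = ⨆ n, ∫⁻ θ, fn n θ ∂(volume : Measure ℝ) := by
      rw [← lintegral_iSup (fun n => hφm.indicator measurableSet_Icc) hmono]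
      exact lintegral_congr fun θ => (hsup θ).symm
    rw [hlim]
    refine iSup_le fun n => ?_
    simp only [hfn]
    rw [lintegral_indicator measurableSet_Icc]
    exact hkey n
  rcases le_total I0 I1 with hc | hc
  · refine le_trans ?_ (le_max_right _ _)
    rw [eLpNorm_eq_sq, eLpNorm_eq_sq]
    refine ENNReal.rpow_le_rpow ?_ (by norm_num)
    rw [← lintegral_sq_full hL2bot]
    exact hT.trans_eq (by rw [max_eq_right hc])
  · refine le_trans ?_ (le_max_left _ _)
    rw [eLpNorm_eq_sq, eLpNorm_eq_sq]
    refine ENNReal.rpow_le_rpow ?_ (by norm_num)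
    rw [← lintegral_sq_full hL2top]
    exact hT.trans_eq (by rw [max_eq_left hc])

end HardyAux

/-- Let `h` be continuous on the closed strip `ℝ + i[-π,0]`, analytic on the
open strip, with `|h(ζ)| ≤ A exp(B e^{α|Re ζ|})` for some `A, B > 0`, `0 < α < 1`, and with
`L²` boundary values `h(θ)`, `h(θ - πi)`.  Then `h ∈ H²(S_{-π,0})`; in fact every horizontal
slice of `h` has `L²`-norm bounded by the maximum of the two boundary `L²`-norms. -/
theorem hardy_of_growth_and_L2_boundary
    (h : ℂ → ℂ)
    (hcont : ContinuousOn h {z : ℂ | -Real.pi ≤ z.im ∧ z.im ≤ 0})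
    (hdiff : DifferentiableOn ℂ h Strip)
    (A B αe : ℝ) (hA : 0 < A) (hB : 0 < B) (hα0 : 0 < αe) (hα1 : αe < 1)
    (hgrowth : ∀ z : ℂ, -Real.pi ≤ z.im → z.im ≤ 0 →
      ‖h z‖ ≤ A * Real.exp (B * Real.exp (αe * |z.re|)))
    (hL2top : MemLp (fun θ : ℝ => h θ) 2 (volume : Measure ℝ))
    (hL2bot : MemLp (fun θ : ℝ => h ((θ : ℂ) - (Real.pi : ℂ) * Complex.I)) 2
      (volume : Measure ℝ)) :
    IsHardy h ∧
    ∀ l ∈ Ioo (-Real.pi) 0,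
      eLpNorm (strSlice h l) 2 (volume : Measure ℝ) ≤
        max (eLpNorm (fun θ : ℝ => h θ) 2 (volume : Measure ℝ))
          (eLpNorm (fun θ : ℝ => h ((θ : ℂ) - (Real.pi : ℂ) * Complex.I)) 2
            (volume : Measure ℝ)) := by
  have hcont' : ContinuousOn h HardyAux.CStrip := hcont
  have hslice : ∀ l ∈ Ioo (-Real.pi) 0,
      eLpNorm (strSlice h l) 2 (volume : Measure ℝ) ≤
        max (eLpNorm (fun θ : ℝ => h θ) 2 (volume : Measure ℝ))
          (eLpNorm (fun θ : ℝ => h ((θ : ℂ) - (Real.pi : ℂ) * Complex.I)) 2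
            (volume : Measure ℝ)) := by
    intro l hl
    exact HardyAux.eLpNorm_slice_le hcont' hdiff hA.le hB.le hα0 hα1 hgrowth hL2top hL2bot hl
  have hfin : max (eLpNorm (fun θ : ℝ => h θ) 2 (volume : Measure ℝ))
      (eLpNorm (fun θ : ℝ => h ((θ : ℂ) - (Real.pi : ℂ) * Complex.I)) 2
        (volume : Measure ℝ)) < ⊤ := max_lt hL2top.2 hL2bot.2
  refine ⟨⟨hdiff, ?_, ⟨_, hfin.ne, hslice⟩⟩, hslice⟩
  intro l hl
  have hlI : ((l:ℂ) * Complex.I) ∈ HardyAux.CStrip := by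
    constructor <;> simp only [Complex.mul_im, Complex.ofReal_re, Complex.I_im,
      Complex.ofReal_im, Complex.I_re, mul_one, mul_zero, zero_mul, add_zero, zero_add]
    · exact hl.1.le
    · exact hl.2.le
  exact ⟨(HardyAux.slice_cont hcont' hlI).aestronglyMeasurable,
    lt_of_le_of_lt (hslice l hl) hfin⟩
end
end

section
/- Let h be continuous on the closed strip ℝ + i[−π,0] and analytic on the open strip ℝ + i(−π,0). Suppose there are A, B, B₁ > 0 and 0 < α < 1 such that |h(ζ)| ≤ A·exp(B·e^{α|Re ζ|}) on the strip, that the boundary values satisfy |h(θ)| ≤ A·e^{B₁θ} and |h(θ − πi)| ≤ A·e^{B₁θ} for all θ ∈ ℝ, and that |h(ζ)| ≤ A for ζ on the segment i[−π,0]. Then |h(ζ)| ≤ A·e^{B₁·Re ζ} on the whole strip. -/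
noncomputable section

open MeasureTheory Complex Filter Set Polynomial

open scoped ENNReal Real

/-- (Phragmén–Lindelöf with one-sided exponential boundary bound.)
Let `h` be continuous on the closed strip `ℝ + i[-π,0]`, analytic on the open strip, with
`|h(ζ)| ≤ A exp(B e^{α|Re ζ|})` for some `A, B, B₁ > 0`, `0 < α < 1`, with the boundary
bounds `|h(θ)| ≤ A e^{B₁ θ}` and `|h(θ - πi)| ≤ A e^{B₁ θ}` for `θ ∈ ℝ`, and `|h(ζ)| ≤ A`
on the segment `i[-π,0]`.  Then `|h(ζ)| ≤ A e^{B₁ Re ζ}` on the whole strip. -/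
theorem phragmen_lindelof_one_sided
    (h : ℂ → ℂ)
    (hcont : ContinuousOn h {z : ℂ | -Real.pi ≤ z.im ∧ z.im ≤ 0})
    (hdiff : DifferentiableOn ℂ h Strip)
    (A B B₁ αe : ℝ) (hA : 0 < A) (hB : 0 < B) (hB₁ : 0 < B₁) (hα0 : 0 < αe) (hα1 : αe < 1)
    (hgrowth : ∀ z : ℂ, -Real.pi ≤ z.im → z.im ≤ 0 →
      ‖h z‖ ≤ A * Real.exp (B * Real.exp (αe * |z.re|)))
    (htop : ∀ θ : ℝ, ‖h θ‖ ≤ A * Real.exp (B₁ * θ))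
    (hbot : ∀ θ : ℝ, ‖h ((θ : ℂ) - (Real.pi : ℂ) * Complex.I)‖ ≤ A * Real.exp (B₁ * θ))
    (hseg : ∀ t ∈ Icc (-Real.pi) 0, ‖h ((t : ℂ) * Complex.I)‖ ≤ A) :
    ∀ z : ℂ, -Real.pi ≤ z.im → z.im ≤ 0 → ‖h z‖ ≤ A * Real.exp (B₁ * z.re) := by
  intro z hz1 hz2
  have hπ : (0:ℝ) < Real.pi := Real.pi_pos
  set g : ℂ → ℂ := fun w => h w * Complex.exp (-(B₁:ℂ) * w) with hgdef
  have hnorm : ∀ w : ℂ, ‖g w‖ = ‖h w‖ * Real.exp (-(B₁ * w.re)) := by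
    intro w
    simp only [hgdef, norm_mul, Complex.norm_exp]
    congr 2
    simp [Complex.mul_re]
  have hstrip : Complex.im ⁻¹' Ioo (-Real.pi) 0 = Strip := by
    ext w; simp [Strip, Set.mem_Ioo]
  have key : ‖g z‖ ≤ A := by
    apply PhragmenLindelof.horizontal_strip (a := -Real.pi) (b := 0)
    · constructor
      · rw [hstrip]
        exact hdiff.mul ((Complex.differentiable_exp.comp (by fun_prop)).differentiableOn)
      · have hcl : closure (Complex.im ⁻¹' Ioo (-Real.pi) 0) ⊆
            {z : ℂ | -Real.pi ≤ z.im ∧ z.im ≤ 0} := by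
          rw [Complex.closure_preimage_im]
          intro w hw
          have := closure_Ioo (by linarith : (-Real.pi : ℝ) ≠ 0) ▸ hw
          exact ⟨this.1, this.2⟩
        exact ContinuousOn.mul (hcont.mono hcl)
          ((Complex.continuous_exp.comp (by fun_prop)).continuousOn)
    · refine ⟨(αe + 1) / 2, ?_, B + 2 * B₁, ?_⟩
      · rw [sub_neg_eq_add, zero_add, div_self hπ.ne']
        linarith
      · rw [Asymptotics.isBigO_iff]
        refine ⟨A, ?_⟩
        rw [Filter.eventually_inf_principal]
        refine Filter.Eventually.of_forall fun w hw => ?_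
        have hw' : -Real.pi < w.im ∧ w.im < 0 := hw
        have hre : (0:ℝ) ≤ |w.re| := abs_nonneg _
        set t := |w.re| with ht
        have hc : (1:ℝ)/2 ≤ (αe + 1)/2 := by linarith
        have h1 : Real.exp (αe * t) ≤ Real.exp ((αe + 1)/2 * t) := by
          apply Real.exp_le_exp.2
          nlinarith
        have h2 : t ≤ 2 * Real.exp ((αe + 1)/2 * t) := by
          have := Real.add_one_le_exp (t / 2)
          have h3 : Real.exp (t/2) ≤ Real.exp ((αe + 1)/2 * t) := by
            apply Real.exp_le_exp.2; nlinarith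
          nlinarith
        have hb1 : ‖g w‖ ≤ A * Real.exp (B * Real.exp (αe * t) + B₁ * t) := by
          rw [hnorm, Real.exp_add]
          have hhw := hgrowth w hw'.1.le hw'.2.le
          have he : Real.exp (-(B₁ * w.re)) ≤ Real.exp (B₁ * t) := by
            apply Real.exp_le_exp.2
            have : -w.re ≤ t := neg_abs_le w.re |>.trans (le_abs_self _) |> fun _ => (neg_le_abs w.re)
            nlinarith [neg_abs_le w.re, le_abs_self w.re, Real.pi_pos]
          calc ‖h w‖ * Real.exp (-(B₁ * w.re))
              ≤ (A * Real.exp (B * Real.exp (αe * t))) * Real.exp (B₁ * t) := by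
                apply mul_le_mul hhw he (Real.exp_pos _).le
                positivity
            _ = A * (Real.exp (B * Real.exp (αe * t)) * Real.exp (B₁ * t)) := by ring
        have hb2 : B * Real.exp (αe * t) + B₁ * t ≤ (B + 2 * B₁) * Real.exp ((αe + 1)/2 * t) := by
          nlinarith [Real.exp_pos ((αe + 1)/2 * t), hB₁.le, hB.le]
        calc ‖g w‖ ≤ A * Real.exp (B * Real.exp (αe * t) + B₁ * t) := hb1
          _ ≤ A * Real.exp ((B + 2 * B₁) * Real.exp ((αe + 1)/2 * t)) := by
              gcongr
          _ ≤ A * ‖Real.exp ((B + 2 * B₁) * Real.exp ((αe + 1)/2 * |w.re|))‖ := by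
              rw [Real.norm_eq_abs, abs_of_pos (Real.exp_pos _)]
    · intro w hw
      have hwe : w = (w.re : ℂ) - (Real.pi : ℂ) * Complex.I := by
        apply Complex.ext <;> simp [hw]
      rw [hnorm]
      have := hbot w.re
      rw [← hwe] at this
      calc ‖h w‖ * Real.exp (-(B₁ * w.re))
          ≤ (A * Real.exp (B₁ * w.re)) * Real.exp (-(B₁ * w.re)) := by
            apply mul_le_mul_of_nonneg_right this (Real.exp_pos _).le
        _ = A := by rw [mul_assoc, ← Real.exp_add]; simp
    · intro w hw
      have hwe : w = (w.re : ℂ) := by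
        apply Complex.ext <;> simp [hw]
      rw [hnorm]
      have := htop w.re
      rw [← hwe] at this
      calc ‖h w‖ * Real.exp (-(B₁ * w.re))
          ≤ (A * Real.exp (B₁ * w.re)) * Real.exp (-(B₁ * w.re)) := by
            apply mul_le_mul_of_nonneg_right this (Real.exp_pos _).le
        _ = A := by rw [mul_assoc, ← Real.exp_add]; simp
    · exact hz1
    · exact hz2
  rw [hnorm] at key
  have := mul_le_mul_of_nonneg_right key (Real.exp_pos (B₁ * z.re)).le
  rw [mul_assoc, ← Real.exp_add, neg_add_cancel, Real.exp_zero, mul_one] at this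
  exact this
end
end
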